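/- For an n-vertex connected graph G, the average connectivity satisfies κ̄(G) ≤ 2α'(G), where κ̄(G) = (1/C(n,2)) Σ over unordered pairs {u,v} of κ(u,v) and α'(G) is the matching number. -/

import Mathlib

open Finset

namespace AvgConn

variable {V : Type*} [Fintype V] [DecidableEq V]

/-- There exist `k` pairwise internally disjoint paths from `u` to `v` in `G`. -/
def InternallyDisjointPaths (G : SimpleGraph V) (u v : V) (k : ℕ) : Prop :=
  ∃ p : Fin k → G.Walk u v, Function.Injective p ∧ (∀ i, (p i).IsPath) ∧
    ∀ i j, i ≠ j → ∀ w, w ∈ (p i).support → w ∈ (p j).support → w = u ∨ w = v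

/-- Local connectivity `κ(u,v)`: the maximum number of internally disjoint `u,v`-paths,
with the convention `κ(v,v) = 0`. -/
noncomputable def localConn (G : SimpleGraph V) (u v : V) : ℕ :=
  if u = v then 0 else sSup {k | InternallyDisjointPaths G u v k}

/-- Vertex connectivity `κ(G)`: minimum number of vertices whose deletion leaves a
disconnected or trivial graph. -/
noncomputable def vertexConnectivity (G : SimpleGraph V) : ℕ :=
  sInf {k | ∃ S : Finset V, S.card = k ∧
    (¬ (G.induce ((Sᶜ : Finset V) : Set V)).Connected ∨ (Sᶜ : Finset V).card ≤ 1)}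

/-- The average connectivity matrix: `(u,v)`-entry `κ(u,v) / C(n,2)`. -/
noncomputable def avgConnMatrix (G : SimpleGraph V) : Matrix V V ℝ :=
  Matrix.of fun u v => (localConn G u v : ℝ) / ((Fintype.card V).choose 2 : ℝ)

/-- Transmission of a vertex: `T(v) = (1/C(n,2)) Σ_w κ(v,w)`. -/
noncomputable def transmission (G : SimpleGraph V) (v : V) : ℝ :=
  (∑ w, (localConn G v w : ℝ)) / ((Fintype.card V).choose 2 : ℝ)

/-- Average connectivity `κ̄(G)`: average of `κ(u,v)` over unordered pairs, equivalently the
sum over ordered pairs divided by `n(n-1)`. -/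
noncomputable def avgConn (G : SimpleGraph V) : ℝ :=
  (∑ u, ∑ v, (localConn G u v : ℝ)) / ((Fintype.card V : ℝ) * ((Fintype.card V : ℝ) - 1))

/-- Matching number `α'(G)`: maximum number of edges in a matching. -/
noncomputable def matchingNumber (G : SimpleGraph V) : ℕ :=
  sSup {k | ∃ M : G.Subgraph, M.IsMatching ∧ M.edgeSet.ncard = k}

/-- Spectral radius of a real square matrix: supremum of absolute values of its
(real) eigenvalues. -/
noncomputable def specRad {n : Type*} [Fintype n] [DecidableEq n] (A : Matrix n n ℝ) : ℝ :=
  sSup {r : ℝ | ∃ μ : ℝ, Module.End.HasEigenvalue (Matrix.toLin' A) μ ∧ r = |μ|}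

/-- The join `G ∨ H` of two graphs: all edges of `G`, of `H`, and all edges between. -/
def graphJoin {α β : Type*} (G : SimpleGraph α) (H : SimpleGraph β) : SimpleGraph (α ⊕ β) where
  Adj x y :=
    match x, y with
    | Sum.inl a, Sum.inl a' => G.Adj a a'
    | Sum.inr b, Sum.inr b' => H.Adj b b'
    | _, _ => True
  symm := ⟨by rintro (a | b) (a' | b') h <;> simp_all <;> exact h.symm⟩
  loopless := ⟨by rintro (a | b) h <;> simp_all⟩


/-!
Internally disjoint `u,v`-paths leave `u` through distinct neighbours, so
`κ(u,v) ≤ min (deg u) (deg v)`.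
Fix a maximum matching `M` with vertex set `W`, so `|W| = 2α'`, and let `U` be the unmatched
vertices. Maximality forbids augmenting paths of length one and three: every neighbour of a
vertex of `U` lies in `W`, and the two ends of an edge `xy ∈ M` cannot see two different vertices
of `U`. Hence `x` and `y` together have at most `|U| + 1` neighbours in `U`, and the number `D` of
`W,U`-edges satisfies `2D ≤ |W| (|U| + 1)`. Pairs inside `W` contribute at most `n - 1` each, and
the pairs through a vertex `u ∈ U` contribute at most `(n - 1) deg u` in each order, so
`Σ κ(u,v) ≤ (n - 1) (|W| (|W| - 1) + 2D) ≤ (n - 1) |W| n = 2α' n (n - 1)`.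
-/

open SimpleGraph

section Paths

variable {α : Type*} {G : SimpleGraph α} {u v : α}

lemma _root_.SimpleGraph.Walk.IsPath.snd_ne_start {p : G.Walk u v} (hp : p.IsPath)
    (huv : u ≠ v) : p.snd ≠ u := by
  cases p with
  | nil => exact absurd rfl huv
  | cons h t =>
    rw [Walk.snd_cons]
    rintro rfl
    exact ((Walk.cons_isPath_iff h t).1 hp).2 t.start_mem_support

lemma _root_.SimpleGraph.Walk.IsPath.eq_of_snd_eq_end {p q : G.Walk u v} (hp : p.IsPath)
    (hq : q.IsPath) (huv : u ≠ v) (hps : p.snd = v) (hqs : q.snd = v) : p = q := by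
  cases p with
  | nil => exact absurd rfl huv
  | cons h t =>
    cases q with
    | nil => exact absurd rfl huv
    | cons h' t' =>
      rw [Walk.snd_cons] at hps hqs
      subst hps hqs
      rw [(Walk.isPath_iff_nil.1 ((Walk.cons_isPath_iff h t).1 hp).1).eq_nil,
        (Walk.isPath_iff_nil.1 ((Walk.cons_isPath_iff h' t').1 hq).1).eq_nil]

end Paths

section LocalConn

variable {α : Type*} {G : SimpleGraph α} {u v : α} {k : ℕ}

lemma InternallyDisjointPaths.symm (h : InternallyDisjointPaths G u v k) :
    InternallyDisjointPaths G v u k := by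
  obtain ⟨p, hinj, hpath, hdisj⟩ := h
  refine ⟨fun i => (p i).reverse, fun i j hij => hinj (Walk.reverse_injective hij),
    fun i => (hpath i).reverse, fun i j hij w hwi hwj => ?_⟩
  rw [Walk.support_reverse, List.mem_reverse] at hwi hwj
  exact (hdisj i j hij w hwi hwj).symm

lemma InternallyDisjointPaths.le_degree [Fintype α] [DecidableRel G.Adj] (huv : u ≠ v)
    (h : InternallyDisjointPaths G u v k) : k ≤ G.degree u := by
  obtain ⟨p, hinj, hpath, hdisj⟩ := h
  have hmem (i : Fin k) : (p i).snd ∈ (p i).support := (p i).getVert_mem_support 1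
  have hsnd : Function.Injective fun i => (p i).snd := by
    intro i j (hij : (p i).snd = (p j).snd)
    by_contra hne
    rcases hdisj i j hne _ (hmem i) (hij ▸ hmem j) with hu | hv
    · exact (hpath i).snd_ne_start huv hu
    · exact hne (hinj ((hpath i).eq_of_snd_eq_end (hpath j) huv hv (hij ▸ hv)))
  calc k = #(univ : Finset (Fin k)) := (card_fin k).symm
    _ ≤ #(G.neighborFinset u) := card_le_card_of_injOn (fun i => (p i).snd)
        (fun i _ => by simpa using Walk.adj_snd (Walk.not_nil_of_ne huv)) hsnd.injOn
    _ = G.degree u := G.card_neighborFinset_eq_degree u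

lemma localConn_self [DecidableEq α] (v : α) : localConn G v v = 0 := if_pos rfl

lemma localConn_le_degree_left [Fintype α] [DecidableEq α] [DecidableRel G.Adj] (u v : α) :
    localConn G u v ≤ G.degree u := by
  unfold localConn
  split_ifs with huv
  · exact Nat.zero_le _
  · exact csSup_le' fun k hk => hk.le_degree huv

lemma localConn_le_degree_right [Fintype α] [DecidableEq α] [DecidableRel G.Adj] (u v : α) :
    localConn G u v ≤ G.degree v := by
  unfold localConn
  split_ifs with huv
  · exact Nat.zero_le _
  · exact csSup_le' fun k hk => hk.symm.le_degree (Ne.symm huv)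

end LocalConn

lemma sum_le_card_sub_one_mul {ι : Type*} [DecidableEq ι] {s : Finset ι} {f : ι → ℕ} {a : ι}
    {b : ℕ} (ha : a ∈ s) (hfa : f a = 0) (hf : ∀ i ∈ s, f i ≤ b) :
    ∑ i ∈ s, f i ≤ (#s - 1) * b := by
  rw [← sum_erase s hfa, ← card_erase_of_mem ha, ← smul_eq_mul]
  exact sum_le_card_nsmul _ _ _ fun i hi => hf i (mem_of_mem_erase hi)

lemma sum_sum_le_card_sub_one_mul {f : V → V → ℕ} {d : V → ℕ} (W : Finset V)
    (hdiag : ∀ v, f v v = 0) (hleft : ∀ u v, f u v ≤ d u) (hright : ∀ u v, f u v ≤ d v)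
    (hd : ∀ v, d v ≤ Fintype.card V - 1) :
    ∑ u, ∑ v, f u v ≤ (Fintype.card V - 1) * (#W * (#W - 1) + 2 * ∑ u ∈ Wᶜ, d u) := by
  set n := Fintype.card V
  have hWW : ∑ u ∈ W, ∑ v ∈ W, f u v ≤ #W * ((#W - 1) * (n - 1)) := by
    rw [← smul_eq_mul]
    exact sum_le_card_nsmul _ _ _ fun u hu =>
      sum_le_card_sub_one_mul hu (hdiag u) fun v _ => (hright u v).trans (hd v)
  have hWU : ∑ u ∈ W, ∑ v ∈ Wᶜ, f u v ≤ (n - 1) * ∑ v ∈ Wᶜ, d v := by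
    rw [sum_comm, mul_sum]
    exact sum_le_sum fun v _ => (sum_le_sum_of_subset (subset_univ W)).trans
      (sum_le_card_sub_one_mul (mem_univ v) (hdiag v) fun u _ => hright u v)
  have hU : ∑ u ∈ Wᶜ, ∑ v, f u v ≤ (n - 1) * ∑ u ∈ Wᶜ, d u := by
    rw [mul_sum]
    exact sum_le_sum fun u _ =>
      sum_le_card_sub_one_mul (mem_univ u) (hdiag u) fun v _ => hleft u v
  calc ∑ u, ∑ v, f u v
      = ∑ u ∈ W, ∑ v ∈ W, f u v + ∑ u ∈ W, ∑ v ∈ Wᶜ, f u v + ∑ u ∈ Wᶜ, ∑ v, f u v := by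
        rw [← sum_add_distrib, ← sum_add_sum_compl W]
        simp only [sum_add_sum_compl]
    _ ≤ #W * ((#W - 1) * (n - 1)) + (n - 1) * ∑ u ∈ Wᶜ, d u + (n - 1) * ∑ u ∈ Wᶜ, d u := by
        gcongr
    _ = (n - 1) * (#W * (#W - 1) + 2 * ∑ u ∈ Wᶜ, d u) := by ring

lemma card_add_card_le_card_add_one {ι : Type*} [DecidableEq ι] {s t u : Finset ι}
    (hs : s ⊆ u) (ht : t ⊆ u) (h : ∀ a ∈ s, ∀ b ∈ t, a = b) : #s + #t ≤ #u + 1 := by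
  have hinter : #(s ∩ t) ≤ 1 := card_le_one.2 fun a ha b hb =>
    h a (mem_inter.1 ha).1 b (mem_inter.1 hb).2
  rw [← card_union_add_card_inter]
  exact add_le_add (card_le_card (union_subset hs ht)) hinter

section Matching

variable {α : Type*} {G : SimpleGraph α} {M M' : G.Subgraph} {u u' v x y : α}

open Classical in
noncomputable def _root_.SimpleGraph.Subgraph.mate (M : G.Subgraph) (x : α) : α :=
  if h : ∃ y, M.Adj x y then h.choose else x

lemma _root_.SimpleGraph.Subgraph.IsMatching.adj_mate (hM : M.IsMatching)
    (hx : x ∈ M.verts) : M.Adj x (M.mate x) := by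
  have h : ∃ y, M.Adj x y := (hM hx).exists
  rw [Subgraph.mate, dif_pos h]
  exact h.choose_spec

lemma _root_.SimpleGraph.Subgraph.IsMatching.mate_eq (hM : M.IsMatching) (h : M.Adj x y) :
    M.mate x = y :=
  hM.eq_of_adj_left (hM.adj_mate h.fst_mem) h

lemma _root_.SimpleGraph.Subgraph.IsMatching.mate_mate (hM : M.IsMatching)
    (hx : x ∈ M.verts) : M.mate (M.mate x) = x :=
  hM.mate_eq (hM.adj_mate hx).symm

lemma _root_.SimpleGraph.Subgraph.IsMatching.ncard_verts [Finite α] (hM : M.IsMatching) :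
    M.verts.ncard = 2 * M.edgeSet.ncard := by
  classical
  obtain ⟨W, hW⟩ := M.verts.toFinite.exists_finset_coe
  obtain ⟨E, hE⟩ := M.edgeSet.toFinite.exists_finset_coe
  have hmemW (z : α) : z ∈ W ↔ z ∈ M.verts := by rw [← Finset.mem_coe, hW]
  have hfiber : ∀ e ∈ E, #{x ∈ W | s(x, M.mate x) = e} = 2 := by
    intro e he
    induction e using Sym2.ind with
    | _ p q =>
      have hpq : M.Adj p q := by rw [← Subgraph.mem_edgeSet, ← hE]; exact he
      rw [← card_pair hpq.ne]
      congr 1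
      ext z
      simp only [mem_filter, mem_insert, mem_singleton, hmemW, Sym2.eq_iff]
      constructor
      · rintro ⟨-, ⟨rfl, -⟩ | ⟨rfl, -⟩⟩ <;> simp
      · rintro (rfl | rfl)
        · exact ⟨hpq.fst_mem, .inl ⟨rfl, hM.mate_eq hpq⟩⟩
        · exact ⟨hpq.snd_mem, .inr ⟨rfl, hM.mate_eq hpq.symm⟩⟩
  have hmaps : ∀ x ∈ W, s(x, M.mate x) ∈ E := fun x hx => by
    rw [← Finset.mem_coe, hE]
    exact hM.adj_mate (by rwa [← hW])
  rw [← hW, ← hE, Set.ncard_coe_finset, Set.ncard_coe_finset, card_eq_sum_card_fiberwise hmaps,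
    sum_congr rfl hfiber, sum_const, smul_eq_mul, mul_comm]

lemma _root_.SimpleGraph.Subgraph.IsMatching.deleteVerts {s : Set α} (hM : M.IsMatching)
    (hs : ∀ ⦃a b⦄, M.Adj a b → a ∈ s → b ∈ s) : (M.deleteVerts s).IsMatching := by
  rintro z ⟨hz, hzs⟩
  obtain ⟨w, hw, huniq⟩ := hM hz
  refine ⟨w, Subgraph.deleteVerts_adj.2 ⟨hz, hzs, hw.snd_mem, fun hws => hzs (hs hw.symm hws), hw⟩,
    fun w' hw' => huniq w' (Subgraph.deleteVerts_adj.1 hw').2.2.2.2⟩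

def _root_.SimpleGraph.Subgraph.IsMaximumMatching (M : G.Subgraph) : Prop :=
  M.IsMatching ∧ ∀ M' : G.Subgraph, M'.IsMatching → M'.edgeSet.ncard ≤ M.edgeSet.ncard

lemma _root_.SimpleGraph.Subgraph.IsMaximumMatching.eq_of_verts_eq_insert_insert [Finite α]
    (hM : M.IsMaximumMatching) (hM' : M'.IsMatching) (hu : u ∉ M.verts) (hu' : u' ∉ M.verts)
    (hverts : M'.verts = insert u (insert u' M.verts)) : u = u' := by
  by_contra hne
  have hcard := congrArg Set.ncard hverts
  rw [hM'.ncard_verts, Set.ncard_insert_of_notMem (by simp [hne, hu]),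
    Set.ncard_insert_of_notMem hu', hM.1.ncard_verts] at hcard
  have := hM.2 M' hM'
  omega

lemma _root_.SimpleGraph.Subgraph.IsMaximumMatching.mem_verts_of_adj [Finite α]
    (hM : M.IsMaximumMatching) (hu : u ∉ M.verts) (h : G.Adj u v) : v ∈ M.verts := by
  by_contra hv
  have hM' : (M ⊔ G.subgraphOfAdj h).IsMatching := by
    refine hM.1.sup (.subgraphOfAdj h) ?_
    rw [hM.1.support_eq_verts, (Subgraph.IsMatching.subgraphOfAdj h).support_eq_verts,
      subgraphOfAdj_verts]
    simp [hu, hv]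
  refine h.ne (hM.eq_of_verts_eq_insert_insert hM' hu hv ?_)
  ext z
  simp

lemma _root_.SimpleGraph.Subgraph.IsMaximumMatching.eq_of_adj_of_adj [Finite α]
    (hM : M.IsMaximumMatching) (hxy : M.Adj x y) (hu : u ∉ M.verts) (hu' : u' ∉ M.verts)
    (hux : G.Adj u x) (hu'y : G.Adj u' y) : u = u' := by
  by_contra hne
  have hx := hxy.fst_mem
  have hy := hxy.snd_mem
  have hdel : (M.deleteVerts {x, y}).IsMatching := hM.1.deleteVerts <| by
    rintro a b hab (rfl | rfl)
    · exact .inr (hM.1.eq_of_adj_left hab hxy)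
    · exact .inl (hM.1.eq_of_adj_left hab hxy.symm)
  have h1 : (M.deleteVerts {x, y} ⊔ G.subgraphOfAdj hux).IsMatching := by
    refine hdel.sup (.subgraphOfAdj hux) ?_
    rw [hdel.support_eq_verts, (Subgraph.IsMatching.subgraphOfAdj hux).support_eq_verts,
      subgraphOfAdj_verts]
    simp [hu]
  have h2 : (M.deleteVerts {x, y} ⊔ G.subgraphOfAdj hux ⊔ G.subgraphOfAdj hu'y).IsMatching := by
    refine h1.sup (.subgraphOfAdj hu'y) ?_
    rw [h1.support_eq_verts, (Subgraph.IsMatching.subgraphOfAdj hu'y).support_eq_verts,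
      subgraphOfAdj_verts]
    have hu'x : u' ≠ x := fun h => hu' (h ▸ hx)
    have hyu : y ≠ u := fun h => hu (h ▸ hy)
    simp [hu', Ne.symm hne, hxy.ne.symm, hu'x, hyu]
  refine hne (hM.eq_of_verts_eq_insert_insert h2 hu hu' ?_)
  ext z
  simp only [Subgraph.verts_sup, Subgraph.deleteVerts_verts, subgraphOfAdj_verts, Set.mem_union,
    Set.mem_sdiff, Set.mem_insert_iff, Set.mem_singleton_iff]
  grind

end Matching

lemma exists_isMaximumMatching {α : Type*} [Finite α] (G : SimpleGraph α) :
    ∃ M : G.Subgraph, M.IsMaximumMatching ∧ M.edgeSet.ncard = matchingNumber G := by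
  set S := {k | ∃ M : G.Subgraph, M.IsMatching ∧ M.edgeSet.ncard = k}
  have hbdd : BddAbove S :=
    ⟨Nat.card (Sym2 α), by rintro _ ⟨M, -, rfl⟩; exact Set.ncard_le_card _⟩
  have hne : S.Nonempty := ⟨0, ⊥, fun v hv => hv.elim, by simp⟩
  obtain ⟨M, hM, hcard⟩ := Nat.sSup_mem hne hbdd
  exact ⟨M, ⟨hM, fun M' hM' => hcard ▸ le_csSup hbdd ⟨M', hM', rfl⟩⟩, hcard⟩

lemma _root_.SimpleGraph.Subgraph.IsMaximumMatching.two_mul_sum_degree_compl_le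
    {G : SimpleGraph V} [DecidableRel G.Adj] {M : G.Subgraph} (hM : M.IsMaximumMatching)
    (W : Finset V) (hW : (W : Set V) = M.verts) :
    2 * ∑ u ∈ Wᶜ, G.degree u ≤ #W * (#Wᶜ + 1) := by
  have hmemW (z : V) : z ∈ W ↔ z ∈ M.verts := by rw [← Finset.mem_coe, hW]
  set g : V → ℕ := fun x => #(Wᶜ.bipartiteBelow G.Adj x)
  have hdeg : ∑ u ∈ Wᶜ, G.degree u = ∑ x ∈ W, g x := by
    rw [← sum_card_bipartiteAbove_eq_sum_card_bipartiteBelow]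
    refine sum_congr rfl fun u hu => ?_
    rw [← card_neighborFinset_eq_degree]
    congr 1
    ext x
    have hu' : u ∉ M.verts := by simpa [hmemW] using hu
    rw [mem_neighborFinset, mem_bipartiteAbove, hmemW]
    exact ⟨fun h => ⟨hM.mem_verts_of_adj hu' h, h⟩, And.right⟩
  have hpair : ∀ x ∈ W, g x + g (M.mate x) ≤ #Wᶜ + 1 := by
    intro x hx
    have hxm := hM.1.adj_mate ((hmemW x).1 hx)
    refine card_add_card_le_card_add_one (filter_subset _ _) (filter_subset _ _) ?_
    intro a ha b hb
    simp only [mem_bipartiteBelow, mem_compl, hmemW] at ha hb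
    exact hM.eq_of_adj_of_adj hxm ha.1 hb.1 ha.2 hb.2
  have hmate : ∑ x ∈ W, g (M.mate x) = ∑ x ∈ W, g x := by
    have hmaps : ∀ x ∈ W, M.mate x ∈ W := fun x hx =>
      (hmemW _).2 (hM.1.adj_mate ((hmemW x).1 hx)).snd_mem
    have hinv : ∀ x ∈ W, M.mate (M.mate x) = x := fun x hx => hM.1.mate_mate ((hmemW x).1 hx)
    exact sum_nbij' M.mate M.mate hmaps hmaps hinv hinv fun _ _ => rfl
  calc 2 * ∑ u ∈ Wᶜ, G.degree u = ∑ x ∈ W, (g x + g (M.mate x)) := by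
        rw [sum_add_distrib, hmate, hdeg, two_mul]
    _ ≤ ∑ _x ∈ W, (#Wᶜ + 1) := sum_le_sum hpair
    _ = #W * (#Wᶜ + 1) := by rw [sum_const, smul_eq_mul]

lemma sum_localConn_le (G : SimpleGraph V) [DecidableRel G.Adj] :
    ∑ u, ∑ v, localConn G u v
      ≤ 2 * matchingNumber G * (Fintype.card V * (Fintype.card V - 1)) := by
  obtain ⟨M, hM, hcard⟩ := exists_isMaximumMatching G
  obtain ⟨W, hW⟩ := M.verts.toFinite.exists_finset_coe
  have hW2 : #W = 2 * matchingNumber G := by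
    rw [← hcard, ← hM.1.ncard_verts, ← hW, Set.ncard_coe_finset]
  have hD := hM.two_mul_sum_degree_compl_le W hW
  rw [← hW2, ← card_add_card_compl W]
  calc ∑ u, ∑ v, localConn G u v
      ≤ (#W + #Wᶜ - 1) * (#W * (#W - 1) + 2 * ∑ u ∈ Wᶜ, G.degree u) := by
        rw [card_add_card_compl]
        exact sum_sum_le_card_sub_one_mul W localConn_self localConn_le_degree_left
          localConn_le_degree_right fun v => Nat.le_sub_one_of_lt (G.degree_lt_card_verts v)
    _ ≤ (#W + #Wᶜ - 1) * (#W * (#W - 1) + #W * (#Wᶜ + 1)) := by gcongr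
    _ = #W * ((#W + #Wᶜ) * (#W + #Wᶜ - 1)) := by
        rcases #W with _ | w
        · simp
        · simp only [Nat.add_sub_cancel]
          ring

theorem stmt10_general (G : SimpleGraph V) :
    avgConn G ≤ 2 * (matchingNumber G : ℝ) := by
  classical
  rcases (Fintype.card V).eq_zero_or_pos with hV | hV
  · simp [avgConn, hV]
  have hV' : (1 : ℝ) ≤ Fintype.card V := by exact_mod_cast hV
  refine div_le_of_le_mul₀ (by nlinarith) (by positivity) ?_
  rw [← Nat.cast_pred hV]
  exact_mod_cast sum_localConn_le G

/-- For an `n`-vertex connected graph `G`, `κ̄(G) ≤ 2α'(G)`. -/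
theorem stmt10 (G : SimpleGraph V) (hG : G.Connected) (hn : 2 ≤ Fintype.card V) :
    avgConn G ≤ 2 * (matchingNumber G : ℝ) :=
  stmt10_general G

end AvgConn
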